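/- arXiv:1109.6687 — 3 statements merged into one kernel-verified Lean document; each statement's English description precedes it below -/
import Mathlib

section
/- Let f : P → Q be a surjective order-preserving map from a finite lattice P to a finite poset Q admitting an order-preserving section g : Q → P with f ∘ g = id, and suppose every fiber f⁻¹(q) is an interval of P. Then Q is a lattice. -/
open Function

theorem isLUB_pair_map_sup_of_leftInverse {P Q : Type*} [SemilatticeSup P] [Preorder Q]
    {f : P → Q} {g : Q → P} (hf : Monotone f) (hg : Monotone g) (hfg : LeftInverse f g)
    (x y : Q) : IsLUB {x, y} (f (g x ⊔ g y)) := by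
  constructor
  · rintro q (rfl | rfl)
    · exact (hfg q).symm.le.trans (hf le_sup_left)
    · exact (hfg q).symm.le.trans (hf le_sup_right)
  · intro z hz
    have hxy : g x ⊔ g y ≤ g z := sup_le (hg (hz (by simp))) (hg (hz (by simp)))
    exact (hf hxy).trans (hfg z).le

theorem isGLB_pair_map_inf_of_leftInverse {P Q : Type*} [SemilatticeInf P] [Preorder Q]
    {f : P → Q} {g : Q → P} (hf : Monotone f) (hg : Monotone g) (hfg : LeftInverse f g)
    (x y : Q) : IsGLB {x, y} (f (g x ⊓ g y)) :=
  isLUB_pair_map_sup_of_leftInverse (P := Pᵒᵈ) (Q := Qᵒᵈ) hf.dual hg.dual hfg x y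

theorem interval_retract_lattice_general {P Q : Type*} [Lattice P]
    [PartialOrder Q] (f : P → Q) (g : Q → P)
    (hf : Monotone f) (hg : Monotone g)
    (hsec : ∀ q, f (g q) = q) :
    ∀ x y : Q, (∃ z, IsLUB {x, y} z) ∧ (∃ z, IsGLB {x, y} z) := fun x y =>
  ⟨⟨_, isLUB_pair_map_sup_of_leftInverse hf hg hsec x y⟩,
    ⟨_, isGLB_pair_map_inf_of_leftInverse hf hg hsec x y⟩⟩

/-- If `f : P → Q` is a surjective order-preserving map from a finite lattice `P`
to a finite poset `Q`, admitting an order-preserving section `g` with `f ∘ g = id`,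
and every fiber of `f` is an interval of `P`, then `Q` is a lattice
(every pair of elements has a least upper bound and a greatest lower bound). -/
theorem interval_retract_lattice {P Q : Type*} [Lattice P] [Finite P]
    [PartialOrder Q] [Finite Q] (f : P → Q) (g : Q → P)
    (hsurj : Function.Surjective f) (hf : Monotone f) (hg : Monotone g)
    (hsec : ∀ q, f (g q) = q)
    (hfib : ∀ q : Q, ∃ a b : P, a ≤ b ∧ f ⁻¹' {q} = Set.Icc a b) :
    ∀ x y : Q, (∃ z, IsLUB {x, y} z) ∧ (∃ z, IsGLB {x, y} z) :=
  interval_retract_lattice_general f g hf hg hsec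
end

section
/- Let f : P → Q be an interval retract from a finite lattice P onto a finite lattice Q. Then the Möbius functions satisfy μ_Q(x,y) = Σ_{a,b : f(a)=x, f(b)=y} μ_P(a,b) for all x, y in Q. -/
/-!
The map `b ↦ b ⊔ g (f b)` is a closure operator on `P`: it stays in the fibre of `b`, because
fibres are intervals and hence closed under `⊔`. Its closed elements `C = {b | g (f b) ≤ b}` form
a poset through which `f` factors as the closure map `P → C`, left adjoint to the inclusion,
followed by `f : C → Q`, right adjoint to `g : Q → C`. Rota's Galois connection theorem
`μ_A · [l a = b] = [a = u b] · μ_B` applied to both adjunctions turns `Fᵀ μ_P F` into `μ_Q`,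
where `F` is the 0/1 matrix of the graph of `f`; the entries of `Fᵀ μ_P F` are the fibre sums.
-/

open scoped Classical

open Finset Matrix

section ZetaMatrix

variable {α β γ : Type*} (R : Type*)

noncomputable def zetaMatrix (α : Type*) [LE α] [Zero R] [One R] : Matrix α α R :=
  of fun a b => if a ≤ b then 1 else 0

noncomputable def graphMatrix [Zero R] [One R] (f : α → β) : Matrix α β R :=
  of fun a b => if f a = b then 1 else 0

variable {R}

theorem graphMatrix_id [Zero R] [One R] : graphMatrix R (id : α → α) = 1 := by
  ext a b
  simp [graphMatrix, one_apply]

theorem graphMatrix_mul [Fintype β] [NonAssocSemiring R] (f : α → β) (M : Matrix β γ R) :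
    graphMatrix R f * M = M.submatrix f id := by
  ext a c
  simp [graphMatrix, mul_apply]

theorem mul_graphMatrix_transpose [Fintype β] [NonAssocSemiring R] (M : Matrix γ β R)
    (f : α → β) : M * (graphMatrix R f)ᵀ = M.submatrix id f := by
  ext a c
  simp [graphMatrix, mul_apply]

theorem graphMatrix_mul_graphMatrix [Fintype β] [NonAssocSemiring R] (f : α → β) (g : β → γ) :
    graphMatrix R f * graphMatrix R g = graphMatrix R (g ∘ f) := by
  rw [graphMatrix_mul]
  rfl

theorem graphMatrix_mul_graphMatrix_eq_one [Fintype β] [NonAssocSemiring R] {f : α → β}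
    {g : β → α} (h : Function.LeftInverse g f) : graphMatrix R f * graphMatrix R g = 1 := by
  rw [graphMatrix_mul_graphMatrix, h.comp_eq_id, graphMatrix_id]

theorem graphMatrix_transpose_mul_mul_graphMatrix_apply [Fintype α] [NonAssocSemiring R]
    (f : α → β) (M : Matrix α α R) (x y : β) :
    ((graphMatrix R f)ᵀ * M * graphMatrix R f) x y =
      ∑ p ∈ univ.filter (fun p : α × α => f p.1 = x ∧ f p.2 = y), M p.1 p.2 := by
  simp only [graphMatrix, mul_apply, transpose_apply, of_apply, sum_filter,
    Fintype.sum_prod_type, ite_and, boole_mul, mul_boole, ite_sum_zero]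
  rw [sum_comm]
  simp only [← ite_and, and_comm]

theorem mul_zetaMatrix_eq_one [PartialOrder α] [Fintype α] [NonAssocSemiring R] {μ : α → α → R}
    (hμ0 : ∀ a b, ¬ a ≤ b → μ a b = 0)
    (hμ : ∀ a b, a ≤ b →
      ∑ c ∈ univ.filter (fun c => a ≤ c ∧ c ≤ b), μ a c = if a = b then 1 else 0) :
    of μ * zetaMatrix R α = 1 := by
  ext a b
  have hterm (c : α) :
      μ a c * (if c ≤ b then 1 else 0) = if a ≤ c ∧ c ≤ b then μ a c else 0 := by
    by_cases hac : a ≤ c <;> simp [hac, hμ0]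
  simp only [mul_apply, of_apply, zetaMatrix, hterm, ← sum_filter, one_apply]
  by_cases hab : a ≤ b
  · exact hμ a b hab
  · rw [filter_eq_empty_iff.2 fun c _ h => hab (h.1.trans h.2), sum_empty,
      if_neg (ne_of_not_le hab)]

theorem exists_zetaMatrix_mul_eq_one [PartialOrder α] [Fintype α] [CommRing R] :
    ∃ μ : Matrix α α R, zetaMatrix R α * μ = 1 := by
  let := Fintype.toLocallyFiniteOrder (α := α)
  refine ⟨of (IncidenceAlgebra.mu R), mul_eq_one_comm.mp (mul_zetaMatrix_eq_one
    (fun a b h => IncidenceAlgebra.apply_eq_zero_of_not_le h _) fun a b _ => ?_)⟩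
  rw [← IncidenceAlgebra.sum_Icc_mu_right]
  congr 1
  ext c
  simp

/-- Rota's Galois connection theorem, in matrix form. -/
theorem GaloisConnection.mobius_mul_graphMatrix [Preorder α] [Preorder β] [Fintype α]
    [Fintype β] [Semiring R] {l : α → β} {u : β → α} (gc : GaloisConnection l u)
    {μα : Matrix α α R} {μβ : Matrix β β R}
    (hα : μα * zetaMatrix R α = 1) (hβ : zetaMatrix R β * μβ = 1) :
    μα * graphMatrix R l = (graphMatrix R u)ᵀ * μβ := by
  have hζ : graphMatrix R l * zetaMatrix R β = zetaMatrix R α * (graphMatrix R u)ᵀ := by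
    rw [graphMatrix_mul, mul_graphMatrix_transpose]
    ext a b
    simp [zetaMatrix, gc a b]
  calc μα * graphMatrix R l = μα * (graphMatrix R l * zetaMatrix R β) * μβ := by
        rw [Matrix.mul_assoc, Matrix.mul_assoc, hβ, Matrix.mul_one]
    _ = (graphMatrix R u)ᵀ * μβ := by
        rw [hζ, ← Matrix.mul_assoc, hα, Matrix.one_mul]

end ZetaMatrix

theorem ClosureOperator.gc_toCloseds {α : Type*} [PartialOrder α] (c : ClosureOperator α) :
    GaloisConnection c.toCloseds Subtype.val :=
  fun _ y => y.2.closure_le_iff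

theorem apply_sup_of_fibers_eq_Icc {P Q : Type*} [Lattice P] {f : P → Q}
    (hfib : ∀ q, ∃ a b : P, a ≤ b ∧ f ⁻¹' {q} = Set.Icc a b)
    {a b : P} (h : f a = f b) : f (a ⊔ b) = f a := by
  obtain ⟨m, M, -, hIcc⟩ := hfib (f a)
  have ha : a ∈ Set.Icc m M := by rw [← hIcc]; rfl
  have hb : b ∈ Set.Icc m M := by rw [← hIcc]; exact h.symm
  have hab : a ⊔ b ∈ Set.Icc m M := ⟨le_sup_of_le_left ha.1, sup_le ha.2 hb.2⟩
  rwa [← hIcc] at hab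

section IntervalRetract

variable {P Q : Type*} [Lattice P] [PartialOrder Q] {f : P → Q} {g : Q → P}
  (hf : Monotone f) (hg : Monotone g) (hsup : ∀ b, f (b ⊔ g (f b)) = f b)

def retractClosure : ClosureOperator P :=
  .ofPred (fun b => b ⊔ g (f b)) (fun b => g (f b) ≤ b) (fun _ => le_sup_left)
    (fun b => by rw [hsup]; exact le_sup_right)
    (fun _ _ hab hb => sup_le hab ((hg (hf hab)).trans hb))

theorem retractClosure_isClosed_iff {b : P} :
    (retractClosure hf hg hsup).IsClosed b ↔ g (f b) ≤ b :=
  Iff.rfl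

theorem gc_retractClosure (hsec : ∀ q, f (g q) = q) :
    GaloisConnection
      (fun q => (⟨g q, (retractClosure_isClosed_iff hf hg hsup).2 (by rw [hsec])⟩ :
        (retractClosure hf hg hsup).Closeds))
      (fun w => f w) :=
  fun q w => ⟨fun h => hsec q ▸ hf h, fun h => (hg h).trans w.2⟩

end IntervalRetract

theorem graphMatrix_transpose_mul_mul_graphMatrix_eq_of_retract {P Q R : Type*} [Lattice P]
    [PartialOrder Q] [Fintype P] [Fintype Q] [CommRing R] {f : P → Q} {g : Q → P}
    (hf : Monotone f) (hg : Monotone g) (hsup : ∀ b, f (b ⊔ g (f b)) = f b)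
    (hsec : ∀ q, f (g q) = q) {μP : Matrix P P R} {μQ : Matrix Q Q R}
    (hμP : μP * zetaMatrix R P = 1) (hμQ : μQ * zetaMatrix R Q = 1) :
    (graphMatrix R f)ᵀ * μP * graphMatrix R f = μQ := by
  set c := retractClosure hf hg hsup
  obtain ⟨μC, hμC⟩ := exists_zetaMatrix_mul_eq_one (R := R) (α := c.Closeds)
  have hP := c.gc_toCloseds.mobius_mul_graphMatrix hμP hμC
  have hQ := (gc_retractClosure hf hg hsup hsec).mobius_mul_graphMatrix hμQ hμC
  have hfactor : graphMatrix R c.toCloseds * graphMatrix R (fun w : c.Closeds => f w) =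
      graphMatrix R f := by
    rw [graphMatrix_mul_graphMatrix]
    exact congrArg _ (funext hsup)
  calc (graphMatrix R f)ᵀ * μP * graphMatrix R f
      = (graphMatrix R f)ᵀ * (μP * graphMatrix R c.toCloseds) *
          graphMatrix R (fun w : c.Closeds => f w) := by
        rw [← hfactor, Matrix.mul_assoc, Matrix.mul_assoc, Matrix.mul_assoc]
    _ = (graphMatrix R (Subtype.val : c.Closeds → P) * graphMatrix R f)ᵀ * μC *
          graphMatrix R (fun w : c.Closeds => f w) := by
        rw [hP, transpose_mul]
        simp only [Matrix.mul_assoc]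
    _ = (graphMatrix R (fun w : c.Closeds => f w))ᵀ * μC *
          graphMatrix R (fun w : c.Closeds => f w) := by
        rw [graphMatrix_mul_graphMatrix]
        rfl
    _ = μQ := by
        rw [← hQ, Matrix.mul_assoc, graphMatrix_mul_graphMatrix_eq_one, Matrix.mul_one]
        exact hsec

theorem interval_retract_mobius_general {P Q : Type*} [Lattice P] [Fintype P]
    [Lattice Q] [Fintype Q] (f : P → Q) (g : Q → P)
    (hf : Monotone f) (hg : Monotone g)
    (hsec : ∀ q, f (g q) = q)
    (hfib : ∀ q : Q, ∃ a b : P, a ≤ b ∧ f ⁻¹' {q} = Set.Icc a b)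
    (μP : P → P → ℤ) (μQ : Q → Q → ℤ)
    (hμP0 : ∀ a b : P, ¬ a ≤ b → μP a b = 0)
    (hμP : ∀ a b : P, a ≤ b →
      (∑ c ∈ Finset.univ.filter (fun c => a ≤ c ∧ c ≤ b), μP a c) =
        if a = b then 1 else 0)
    (hμQ0 : ∀ x y : Q, ¬ x ≤ y → μQ x y = 0)
    (hμQ : ∀ x y : Q, x ≤ y →
      (∑ z ∈ Finset.univ.filter (fun z => x ≤ z ∧ z ≤ y), μQ x z) =
        if x = y then 1 else 0) :
    ∀ x y : Q, μQ x y =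
      ∑ p ∈ Finset.univ.filter (fun p : P × P => f p.1 = x ∧ f p.2 = y),
        μP p.1 p.2 := by
  have hsup (b : P) : f (b ⊔ g (f b)) = f b := apply_sup_of_fibers_eq_Icc hfib (hsec (f b)).symm
  intro x y
  rw [← of_apply μQ x y,
    ← graphMatrix_transpose_mul_mul_graphMatrix_eq_of_retract hf hg hsup hsec
    (mul_zetaMatrix_eq_one hμP0 hμP) (mul_zetaMatrix_eq_one hμQ0 hμQ),
    graphMatrix_transpose_mul_mul_graphMatrix_apply]
  rfl

/-- If `f : P → Q` is an interval retract between finite lattices (fibers are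
intervals, and there is an order-preserving section `g` with `f ∘ g = id`), then
the Möbius functions of `P` and `Q` (characterized by the defining recurrence of
the Möbius function of the incidence algebra) are related by
`μ_Q(x,y) = Σ_{f(a)=x, f(b)=y} μ_P(a,b)`. -/
theorem interval_retract_mobius {P Q : Type*} [Lattice P] [Fintype P]
    [Lattice Q] [Fintype Q] (f : P → Q) (g : Q → P)
    (hsurj : Function.Surjective f) (hf : Monotone f) (hg : Monotone g)
    (hsec : ∀ q, f (g q) = q)
    (hfib : ∀ q : Q, ∃ a b : P, a ≤ b ∧ f ⁻¹' {q} = Set.Icc a b)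
    (μP : P → P → ℤ) (μQ : Q → Q → ℤ)
    (hμP0 : ∀ a b : P, ¬ a ≤ b → μP a b = 0)
    (hμP : ∀ a b : P, a ≤ b →
      (∑ c ∈ Finset.univ.filter (fun c => a ≤ c ∧ c ≤ b), μP a c) =
        if a = b then 1 else 0)
    (hμQ0 : ∀ x y : Q, ¬ x ≤ y → μQ x y = 0)
    (hμQ : ∀ x y : Q, x ≤ y →
      (∑ z ∈ Finset.univ.filter (fun z => x ≤ z ∧ z ≤ y), μQ x z) =
        if x = y then 1 else 0) :
    ∀ x y : Q, μQ x y =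
      ∑ p ∈ Finset.univ.filter (fun p : P × P => f p.1 = x ∧ f p.2 = y),
        μP p.1 p.2 :=
  interval_retract_mobius_general f g hf hg hsec hfib μP μQ hμP0 hμP hμQ0 hμQ
end

section
/- The number of maximal tubings (n-tubings) of the complete graph on n nodes is n!, and the number of maximal tubings of the path graph on n nodes is the Catalan number C_n. -/
/-- A tubing of a simple graph `G`: a set of tubes (nonempty node sets inducing
connected subgraphs), pairwise compatible (nested or far apart, i.e. the union
does not induce a connected subgraph), containing the universal tube. -/
structure Tubing {V : Type*} (G : SimpleGraph V) where
  tubes : Set (Set V)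
  htube : ∀ s ∈ tubes, s.Nonempty ∧ (G.induce s).Connected
  hcompat : ∀ s ∈ tubes, ∀ t ∈ tubes,
    s ⊆ t ∨ t ⊆ s ∨ ¬ (G.induce (s ∪ t : Set V)).Connected
  huniv : Set.univ ∈ tubes

/-!
In a tubing of the complete graph any two tubes are nested, since every union of tubes is
connected. An `n`-tubing is therefore a chain of node sets of sizes `1, …, n`, that is, a complete
flag, and complete flags are the families of initial segments of the `n!` linear orders of the
nodes.

The tubes of the path graph are its intervals, and two intervals are compatible when they are
nested or separated by a gap. In a tubing of the path on `[l, r)` some node `x` is covered by no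
tube other than `[l, r)`, and every other tube lies in `[l, x)` or in `[x + 1, r)`; by induction a
tubing has at most `r - l` tubes. A maximal tubing is thus the universal tube over a maximal
tubing of `[l, x)` and one of `[x + 1, r)`, where the root `x` is recovered as the right end of the
universal tube of the left part. This gives the Catalan recurrence.
-/

open SimpleGraph

theorem Tubing.tubes_injective {V : Type*} {G : SimpleGraph V} :
    Function.Injective (Tubing.tubes (G := G)) := by
  rintro ⟨_, _, _, _⟩ ⟨_, _, _, _⟩ rfl
  rfl

section CompleteGraph

variable {V : Type*} {n : ℕ}

lemma induce_top_connected {s : Set V} (hs : s.Nonempty) :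
    ((⊤ : SimpleGraph V).induce s).Connected := by
  have := hs.to_subtype
  rw [← completeGraph, induce_top]
  exact connected_top

lemma Tubing.isChain_tubes_top (T : Tubing (⊤ : SimpleGraph V)) : IsChain (· ⊆ ·) T.tubes := by
  intro s hs t ht _
  rcases T.hcompat s hs t ht with h | h | h
  · exact .inl h
  · exact .inr h
  · exact (h (induce_top_connected ((T.htube s hs).1.mono Set.subset_union_left))).elim

lemma IsChain.subset_of_ncard_le [Finite V] {C : Set (Set V)} (hC : IsChain (· ⊆ ·) C)
    {s t : Set V} (hs : s ∈ C) (ht : t ∈ C) (hst : s.ncard ≤ t.ncard) : s ⊆ t := by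
  rcases hC.total hs ht with h | h
  · exact h
  · exact (Set.eq_of_subset_of_ncard_le h hst).ge

lemma ncard_preimage_Iic (e : V ≃ Fin n) (k : Fin n) : (e ⁻¹' Set.Iic k).ncard = k + 1 := by
  rw [Set.ncard_preimage_of_injective_subset_range e.injective (by simp), ← Finset.coe_Iic,
    Set.ncard_coe_finset, Fin.card_Iic]

def flagTubing [Nonempty V] (e : V ≃ Fin n) : Tubing (⊤ : SimpleGraph V) where
  tubes := Set.range fun k => e ⁻¹' Set.Iic k
  htube := by
    rintro _ ⟨k, rfl⟩
    have hne : (e ⁻¹' Set.Iic k).Nonempty := ⟨e.symm k, by simp⟩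
    exact ⟨hne, induce_top_connected hne⟩
  hcompat := by
    rintro _ ⟨k, rfl⟩ _ ⟨j, rfl⟩
    rcases le_total k j with h | h
    · exact .inl (Set.preimage_mono (Set.Iic_subset_Iic.2 h))
    · exact .inr (.inl (Set.preimage_mono (Set.Iic_subset_Iic.2 h)))
  huniv := by
    obtain ⟨x⟩ := ‹Nonempty V›
    have hn : 0 < n := (e x).pos
    refine ⟨⟨n - 1, by omega⟩, Set.eq_univ_of_forall fun y => ?_⟩
    simp only [Set.mem_preimage, Set.mem_Iic, Fin.le_def]
    omega

lemma ncard_flagTubing [Nonempty V] (e : V ≃ Fin n) : (flagTubing e).tubes.ncard = n :=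
  (Set.ncard_range_of_injective
    ((Set.preimage_injective.2 e.surjective).comp Set.Iic_injective)).trans (Nat.card_fin n)

lemma flagTubing_injective [Nonempty V] :
    Function.Injective (flagTubing : (V ≃ Fin n) → Tubing (⊤ : SimpleGraph V)) := by
  intro e e' h
  have hseg : ∀ k, e ⁻¹' Set.Iic k = e' ⁻¹' Set.Iic k := by
    intro k
    obtain ⟨j, hj⟩ : e ⁻¹' Set.Iic k ∈ (flagTubing e').tubes := h ▸ ⟨k, rfl⟩
    have hjk : j = k := Fin.ext (by simpa [ncard_preimage_Iic] using congrArg Set.ncard hj)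
    rw [← hj, hjk]
  ext x
  apply congrArg Fin.val
  apply le_antisymm
  · exact (hseg (e' x)).ge (le_refl (e' x))
  · exact (hseg (e x)).le (le_refl (e x))

lemma exists_equiv_preimage_Iic_eq [Finite V] (hV : Nat.card V = n) {S : Fin n → Set V}
    (hS : Monotone S) (hcard : ∀ k, (S k).ncard = k + 1) (hcover : ∀ x, ∃ k, x ∈ S k) :
    ∃ e : V ≃ Fin n, ∀ k, e ⁻¹' Set.Iic k = S k := by
  classical
  let f : V → Fin n := fun x =>
    (Finset.univ.filter (x ∈ S ·)).min' ((hcover x).imp fun k hk => by simpa using hk)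
  have hf : ∀ x k, f x ≤ k ↔ x ∈ S k := fun x k =>
    ⟨fun h => hS h (Finset.mem_filter.1 (Finset.min'_mem (Finset.univ.filter (x ∈ S ·)) _)).2,
     fun h => Finset.min'_le _ _ (by simpa using h)⟩
  have hsurj : Function.Surjective f := by
    rintro ⟨_ | j, hk⟩
    · obtain ⟨x, hx⟩ := Set.nonempty_of_ncard_ne_zero (s := S ⟨0, hk⟩) (by simp [hcard])
      have h := (hf x _).2 hx
      refine ⟨x, Fin.ext ?_⟩
      simp only [Fin.le_def] at h ⊢
      omega
    · obtain ⟨x, hx, hxj⟩ := Set.exists_mem_notMem_of_ncard_lt_ncard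
        (s := S ⟨j, by omega⟩) (t := S ⟨j + 1, hk⟩) (by simp [hcard])
      have h1 := (hf x _).2 hx
      have h2 := mt (hf x _).1 hxj
      refine ⟨x, Fin.ext ?_⟩
      simp only [Fin.le_def, not_le] at h1 h2 ⊢
      omega
  refine ⟨Equiv.ofBijective f (hsurj.bijective_of_nat_card_le (by simp [hV])), fun k => ?_⟩
  ext x
  exact hf x k

lemma exists_flagTubing_eq [Finite V] [Nonempty V] (T : Tubing (⊤ : SimpleGraph V))
    (hT : T.tubes.ncard = Nat.card V) : ∃ e : V ≃ Fin (Nat.card V), flagTubing e = T := by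
  have hsub : ∀ {s t}, s ∈ T.tubes → t ∈ T.tubes → s.ncard ≤ t.ncard → s ⊆ t :=
    T.isChain_tubes_top.subset_of_ncard_le
  have hpos : ∀ s ∈ T.tubes, 0 < s.ncard := fun s hs =>
    (Set.ncard_pos (Set.toFinite s)).2 (T.htube s hs).1
  let size : T.tubes → Fin (Nat.card V) := fun s =>
    ⟨s.1.ncard - 1, by have := hpos s s.2; have := Set.ncard_le_card s.1; omega⟩
  have hsize : size.Injective := by
    rintro ⟨s, hs⟩ ⟨t, ht⟩ h
    have := hpos s hs
    have := hpos t ht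
    simp only [size, Fin.mk.injEq] at h
    exact Subtype.ext ((hsub hs ht (by omega)).antisymm (hsub ht hs (by omega)))
  -- the `n` tubes have pairwise distinct sizes in `[1, n]`, so there is one tube of each size
  let rank : T.tubes ≃ Fin (Nat.card V) := Equiv.ofBijective size
    (hsize.bijective_of_nat_card_le (by simp [Nat.card_coe_set_eq, hT]))
  have hcard : ∀ k, (rank.symm k : Set V).ncard = k + 1 := fun k => by
    have := hpos _ (rank.symm k).2
    have : (rank (rank.symm k) : ℕ) = k := by rw [rank.apply_symm_apply]
    change (rank.symm k : Set V).ncard - 1 = k at this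
    omega
  obtain ⟨e, he⟩ := exists_equiv_preimage_Iic_eq rfl (S := fun k => (rank.symm k : Set V))
    (fun j k hjk => hsub (rank.symm j).2 (rank.symm k).2 (by simp [hcard, hjk]))
    hcard (fun x => ⟨rank ⟨_, T.huniv⟩, by rw [rank.symm_apply_apply]; trivial⟩)
  refine ⟨e, Tubing.tubes_injective ?_⟩
  ext s
  simp only [flagTubing, he, Set.mem_range]
  exact ⟨by rintro ⟨k, rfl⟩; exact (rank.symm k).2,
    fun hs => ⟨rank ⟨s, hs⟩, by rw [rank.symm_apply_apply]⟩⟩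

theorem card_maximal_tubings_top [Finite V] [Nonempty V] :
    Nat.card {T : Tubing (⊤ : SimpleGraph V) // T.tubes.ncard = Nat.card V} =
      (Nat.card V).factorial := by
  have hbij : Function.Bijective fun e : V ≃ Fin (Nat.card V) =>
      (⟨flagTubing e, ncard_flagTubing e⟩ : {T : Tubing ⊤ // T.tubes.ncard = Nat.card V}) :=
    ⟨fun e e' h => flagTubing_injective (congrArg Subtype.val h),
     fun T => (exists_flagTubing_eq T.1 T.2).imp fun e he => Subtype.ext he⟩
  rw [← Nat.card_eq_of_bijective _ hbij,
    Nat.card_congr (Equiv.equivCongr (Finite.equivFin V) (Equiv.refl _)), Nat.card_perm,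
    Nat.card_fin]

end CompleteGraph

section IntervalTubings

/-- The half-open intervals `[p.1, p.2)` and `[q.1, q.2)` are nested or separated by a gap. -/
def IntervalsCompatible (p q : ℕ × ℕ) : Prop :=
  (q.1 ≤ p.1 ∧ p.2 ≤ q.2) ∨ (p.1 ≤ q.1 ∧ q.2 ≤ p.2) ∨ p.2 < q.1 ∨ q.2 < p.1

/-- A tubing of the path on the nodes `[l, r)`, each tube `[p.1, p.2)` encoded by `p`; the
universal tube is not required to be present. -/
def IsIntervalTubing (l r : ℕ) (F : Finset (ℕ × ℕ)) : Prop :=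
  (∀ p ∈ F, l ≤ p.1 ∧ p.1 < p.2 ∧ p.2 ≤ r) ∧ ∀ p ∈ F, ∀ q ∈ F, IntervalsCompatible p q

variable {l r x : ℕ} {F : Finset (ℕ × ℕ)}

lemma IsIntervalTubing.subset {l' r' : ℕ} {G : Finset (ℕ × ℕ)} (hF : IsIntervalTubing l r F)
    (hGF : G ⊆ F) (hG : ∀ p ∈ G, l' ≤ p.1 ∧ p.2 ≤ r') : IsIntervalTubing l' r' G :=
  ⟨fun p hp => ⟨(hG p hp).1, (hF.1 p (hGF hp)).2.1, (hG p hp).2⟩,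
    fun p hp q hq => hF.2 p (hGF hp) q (hGF hq)⟩

lemma IsIntervalTubing.erase (hF : IsIntervalTubing l r F) (q : ℕ × ℕ) :
    IsIntervalTubing l r (F.erase q) :=
  hF.subset (F.erase_subset q) fun p hp => by
    have := hF.1 p (Finset.mem_of_mem_erase hp)
    omega

lemma IsIntervalTubing.filter_left (hF : IsIntervalTubing l r F) :
    IsIntervalTubing l x (F.filter (·.2 ≤ x)) :=
  hF.subset (Finset.filter_subset _ _) fun p hp => by
    rw [Finset.mem_filter] at hp
    have := hF.1 p hp.1
    omega

lemma IsIntervalTubing.filter_right (hF : IsIntervalTubing l r F) :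
    IsIntervalTubing (x + 1) r (F.filter (x < ·.1)) :=
  hF.subset (Finset.filter_subset _ _) fun p hp => by
    rw [Finset.mem_filter] at hp
    have := hF.1 p hp.1
    omega

lemma filter_union_filter_of_forall (hx : ∀ p ∈ F, p.2 ≤ x ∨ x < p.1) :
    F.filter (·.2 ≤ x) ∪ F.filter (x < ·.1) = F := by
  rw [← Finset.filter_or, Finset.filter_true_of_mem hx]

lemma IsIntervalTubing.exists_uncovered (hF : IsIntervalTubing l r F) (hlr : l < r)
    (htop : (l, r) ∉ F) : ∃ x, l ≤ x ∧ x < r ∧ ∀ p ∈ F, p.2 ≤ x ∨ x < p.1 := by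
  by_cases hl : ∃ p ∈ F, p.1 = l
  · -- the longest tube starting at `l` ends just before an uncovered node
    obtain ⟨q, hq, hqmax⟩ := (F.filter (·.1 = l)).exists_max_image Prod.snd
      (by simpa only [Finset.filter_nonempty_iff] using hl)
    rw [Finset.mem_filter] at hq
    have hqtop : q ≠ (l, r) := fun h => htop (h ▸ hq.1)
    have := hF.1 q hq.1
    rw [Ne, Prod.ext_iff] at hqtop
    refine ⟨q.2, by omega, by omega, fun p hp => ?_⟩
    by_cases hpl : p.1 = l
    · exact .inl (hqmax p (Finset.mem_filter.2 ⟨hp, hpl⟩))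
    · have := hF.1 p hp
      have := hF.2 p hp q hq.1
      unfold IntervalsCompatible at this
      omega
  · push Not at hl
    refine ⟨l, le_rfl, hlr, fun p hp => ?_⟩
    have := hF.1 p hp
    have := hl p hp
    omega

theorem IsIntervalTubing.card_le (hF : IsIntervalTubing l r F) : F.card ≤ r - l := by
  induction h : r - l using Nat.strong_induction_on generalizing l r F with
  | _ m ih =>
  rcases le_or_gt r l with hrl | hlr
  · rw [Finset.card_eq_zero.2 (Finset.eq_empty_of_forall_notMem fun p hp => by
      have := hF.1 p hp
      omega)]
    exact Nat.zero_le _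
  · obtain ⟨x, hlx, hxr, hx⟩ := (hF.erase (l, r)).exists_uncovered hlr (F.notMem_erase _)
    have hleft := ih (x - l) (by omega) (hF.erase (l, r)).filter_left rfl
    have hright := ih (r - (x + 1)) (by omega) (hF.erase (l, r)).filter_right rfl
    have hsplit := Finset.card_union_le ((F.erase (l, r)).filter (·.2 ≤ x))
      ((F.erase (l, r)).filter (x < ·.1))
    rw [filter_union_filter_of_forall hx] at hsplit
    have := Finset.pred_card_le_card_erase (s := F) (a := (l, r))
    omega

lemma IsIntervalTubing.card_lt_of_uncovered (hF : IsIntervalTubing l r F) (hlx : l ≤ x)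
    (hxr : x < r) (hx : ∀ p ∈ F, p.2 ≤ x ∨ x < p.1) : F.card < r - l := by
  have hsplit := Finset.card_union_le (F.filter (·.2 ≤ x)) (F.filter (x < ·.1))
  rw [filter_union_filter_of_forall hx] at hsplit
  have := (hF.filter_left (x := x)).card_le
  have := (hF.filter_right (x := x)).card_le
  omega

lemma IsIntervalTubing.top_mem (hF : IsIntervalTubing l r F) (hcard : F.card = r - l)
    (hlr : l < r) : (l, r) ∈ F := by
  by_contra htop
  obtain ⟨x, hlx, hxr, hx⟩ := hF.exists_uncovered hlr htop
  have := hF.card_lt_of_uncovered hlx hxr hx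
  omega

open Classical in
noncomputable def maxIntervalTubings (l r : ℕ) : Finset (Finset (ℕ × ℕ)) :=
  (Finset.Icc l r ×ˢ Finset.Icc l r).powerset.filter
    (fun F => IsIntervalTubing l r F ∧ F.card = r - l)

lemma mem_maxIntervalTubings :
    F ∈ maxIntervalTubings l r ↔ IsIntervalTubing l r F ∧ F.card = r - l := by
  classical
  rw [maxIntervalTubings, Finset.mem_filter, Finset.mem_powerset, and_iff_right_iff_imp]
  rintro ⟨hF, -⟩ p hp
  have := hF.1 p hp
  simp only [Finset.mem_product, Finset.mem_Icc]
  omega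

lemma maxIntervalTubings_of_le (hrl : r ≤ l) : maxIntervalTubings l r = {∅} := by
  ext F
  rw [mem_maxIntervalTubings, Finset.mem_singleton]
  constructor
  · rintro ⟨-, hF⟩
    exact Finset.card_eq_zero.1 (by omega)
  · rintro rfl
    exact ⟨⟨by simp, by simp⟩, by simp; omega⟩

variable {L R : Finset (ℕ × ℕ)}

lemma insert_union_mem_maxIntervalTubings (hlx : l ≤ x) (hxr : x < r)
    (hL : L ∈ maxIntervalTubings l x) (hR : R ∈ maxIntervalTubings (x + 1) r) :
    insert (l, r) (L ∪ R) ∈ maxIntervalTubings l r := by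
  obtain ⟨hL, hLcard⟩ := mem_maxIntervalTubings.1 hL
  obtain ⟨hR, hRcard⟩ := mem_maxIntervalTubings.1 hR
  have hmem : ∀ p ∈ insert (l, r) (L ∪ R), p = (l, r) ∨
      (p ∈ L ∧ l ≤ p.1 ∧ p.1 < p.2 ∧ p.2 ≤ x) ∨ (p ∈ R ∧ x + 1 ≤ p.1 ∧ p.1 < p.2 ∧ p.2 ≤ r) := by
    intro p hp
    rcases Finset.mem_insert.1 hp with hp | hp
    · exact .inl hp
    · rcases Finset.mem_union.1 hp with hp | hp
      · exact .inr (.inl ⟨hp, hL.1 p hp⟩)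
      · exact .inr (.inr ⟨hp, hR.1 p hp⟩)
  have htop : (l, r) ∉ L ∪ R := by
    rw [Finset.mem_union]
    rintro (h | h)
    · have := hL.1 _ h
      omega
    · have := hR.1 _ h
      omega
  have hdisj : Disjoint L R := Finset.disjoint_left.2 fun p hpL hpR => by
    have := hL.1 p hpL
    have := hR.1 p hpR
    omega
  refine mem_maxIntervalTubings.2 ⟨⟨fun p hp => ?_, fun p hp q hq => ?_⟩, ?_⟩
  · rcases hmem p hp with rfl | ⟨-, hp⟩ | ⟨-, hp⟩ <;> omega
  · rcases hmem p hp with rfl | ⟨hpL, hp⟩ | ⟨hpR, hp⟩ <;>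
      rcases hmem q hq with rfl | ⟨hqL, hq⟩ | ⟨hqR, hq⟩
    all_goals first
      | exact hL.2 p hpL q hqL
      | exact hR.2 p hpR q hqR
      | (unfold IntervalsCompatible; omega)
  · rw [Finset.card_insert_of_notMem htop, Finset.card_union_of_disjoint hdisj, hLcard, hRcard]
    omega

lemma eq_of_insert_union_eq {x' : ℕ} {L' R' : Finset (ℕ × ℕ)} (hlx : l ≤ x) (hlx' : l ≤ x')
    (hxr : x < r) (hx'r : x' < r)
    (hL : L ∈ maxIntervalTubings l x) (hR : R ∈ maxIntervalTubings (x + 1) r)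
    (hL' : L' ∈ maxIntervalTubings l x') (hR' : R' ∈ maxIntervalTubings (x' + 1) r)
    (h : insert (l, r) (L ∪ R) = insert (l, r) (L' ∪ R')) : x = x' := by
  wlog hlt : x < x' generalizing x x' L R L' R'
  · rcases (not_lt.1 hlt).eq_or_lt with heq | hgt
    · exact heq.symm
    · exact (this hlx' hlx hx'r hxr hL' hR' hL hR h.symm hgt).symm
  -- the universal tube `[l, x')` of `L'` cannot be a tube of `L`, which lives in `[l, x)`
  obtain ⟨hL', hL'card⟩ := mem_maxIntervalTubings.1 hL'
  have hmem : (l, x') ∈ insert (l, r) (L ∪ R) :=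
    h ▸ Finset.mem_insert_of_mem (Finset.mem_union_left _ (hL'.top_mem hL'card (by omega)))
  rcases Finset.mem_insert.1 hmem with h | h
  · rw [Prod.ext_iff] at h
    omega
  · rcases Finset.mem_union.1 h with h | h
    · have := (mem_maxIntervalTubings.1 hL).1.1 _ h
      omega
    · have := (mem_maxIntervalTubings.1 hR).1.1 _ h
      omega

lemma filter_insert_union_left (hxr : x < r) (hL : IsIntervalTubing l x L)
    (hR : IsIntervalTubing (x + 1) r R) : (insert (l, r) (L ∪ R)).filter (·.2 ≤ x) = L := by
  rw [Finset.filter_insert, if_neg (by omega), Finset.filter_union,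
    Finset.filter_true_of_mem fun p hp => (hL.1 p hp).2.2,
    Finset.filter_false_of_mem fun p hp => by have := hR.1 p hp; omega, Finset.union_empty]

lemma filter_insert_union_right (hlx : l ≤ x) (hL : IsIntervalTubing l x L)
    (hR : IsIntervalTubing (x + 1) r R) : (insert (l, r) (L ∪ R)).filter (x < ·.1) = R := by
  rw [Finset.filter_insert, if_neg (by omega), Finset.filter_union,
    Finset.filter_true_of_mem fun p hp => Nat.lt_of_succ_le (hR.1 p hp).1,
    Finset.filter_false_of_mem fun p hp => by have := hL.1 p hp; omega, Finset.empty_union]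

lemma insert_union_inj {L' R' : Finset (ℕ × ℕ)} (hlx : l ≤ x) (hxr : x < r)
    (hL : IsIntervalTubing l x L) (hR : IsIntervalTubing (x + 1) r R)
    (hL' : IsIntervalTubing l x L') (hR' : IsIntervalTubing (x + 1) r R')
    (h : insert (l, r) (L ∪ R) = insert (l, r) (L' ∪ R')) : L = L' ∧ R = R' :=
  ⟨by rw [← filter_insert_union_left hxr hL hR, h, filter_insert_union_left hxr hL' hR'],
    by rw [← filter_insert_union_right hlx hL hR, h, filter_insert_union_right hlx hL' hR']⟩

lemma exists_insert_union_eq (hF : F ∈ maxIntervalTubings l r) (hlr : l < r) :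
    ∃ x, l ≤ x ∧ x < r ∧ ∃ L ∈ maxIntervalTubings l x, ∃ R ∈ maxIntervalTubings (x + 1) r,
      insert (l, r) (L ∪ R) = F := by
  obtain ⟨hF, hcard⟩ := mem_maxIntervalTubings.1 hF
  have htop := hF.top_mem hcard hlr
  obtain ⟨x, hlx, hxr, hx⟩ := (hF.erase (l, r)).exists_uncovered hlr (F.notMem_erase _)
  have hleft := (hF.erase (l, r)).filter_left (x := x)
  have hright := (hF.erase (l, r)).filter_right (x := x)
  have hsplit := Finset.card_union_le ((F.erase (l, r)).filter (·.2 ≤ x))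
    ((F.erase (l, r)).filter (x < ·.1))
  rw [filter_union_filter_of_forall hx, Finset.card_erase_of_mem htop] at hsplit
  have := hleft.card_le
  have := hright.card_le
  refine ⟨x, hlx, hxr, _, mem_maxIntervalTubings.2 ⟨hleft, by omega⟩,
    _, mem_maxIntervalTubings.2 ⟨hright, by omega⟩, ?_⟩
  rw [filter_union_filter_of_forall hx, Finset.insert_erase htop]

theorem card_maxIntervalTubings_of_lt (hlr : l < r) :
    (maxIntervalTubings l r).card = ∑ x ∈ Finset.Ico l r,
      (maxIntervalTubings l x).card * (maxIntervalTubings (x + 1) r).card := by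
  simp_rw [← Finset.card_product]
  rw [← Finset.card_sigma]
  symm
  apply Finset.card_nbij (fun a => insert (l, r) (a.2.1 ∪ a.2.2))
  · rintro ⟨x, L, R⟩ h
    simp only [Finset.coe_sigma, Set.mem_sigma_iff, Finset.mem_coe, Finset.mem_Ico,
      Finset.mem_product] at h
    exact insert_union_mem_maxIntervalTubings h.1.1 h.1.2 h.2.1 h.2.2
  · rintro ⟨x, L, R⟩ h ⟨x', L', R'⟩ h' heq
    simp only [Finset.coe_sigma, Set.mem_sigma_iff, Finset.mem_coe, Finset.mem_Ico,
      Finset.mem_product] at h h' heq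
    obtain ⟨⟨hlx, hxr⟩, hL, hR⟩ := h
    obtain ⟨⟨hlx', hx'r⟩, hL', hR'⟩ := h'
    obtain rfl := eq_of_insert_union_eq hlx hlx' hxr hx'r hL hR hL' hR' heq
    obtain ⟨rfl, rfl⟩ := insert_union_inj hlx hxr (mem_maxIntervalTubings.1 hL).1
      (mem_maxIntervalTubings.1 hR).1 (mem_maxIntervalTubings.1 hL').1
      (mem_maxIntervalTubings.1 hR').1 heq
    rfl
  · intro F hF
    obtain ⟨x, hlx, hxr, L, hL, R, hR, rfl⟩ := exists_insert_union_eq hF hlr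
    exact ⟨⟨x, L, R⟩, by simp [hlx, hxr, hL, hR], rfl⟩

theorem card_maxIntervalTubings (l r : ℕ) : (maxIntervalTubings l r).card = catalan (r - l) := by
  induction h : r - l using Nat.strong_induction_on generalizing l r with
  | _ m ih =>
  rcases le_or_gt r l with hrl | hlr
  · rw [maxIntervalTubings_of_le hrl, Finset.card_singleton, show m = 0 by omega, catalan_zero]
  · obtain ⟨k, rfl⟩ : ∃ k, m = k + 1 := ⟨m - 1, by omega⟩
    rw [card_maxIntervalTubings_of_lt hlr, catalan_succ, Finset.sum_Ico_eq_sum_range, h,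
      ← Finset.sum_range fun i => catalan i * catalan (k - i)]
    refine Finset.sum_congr rfl fun i hi => ?_
    rw [Finset.mem_range] at hi
    rw [ih i (by omega) l (l + i) (by omega), ih (k - i) (by omega) (l + i + 1) r (by omega)]

end IntervalTubings

section PathGraph

variable {n : ℕ}

theorem induce_pathGraph_connected_iff {s : Set (Fin n)} :
    ((pathGraph n).induce s).Connected ↔ s.Nonempty ∧ s.OrdConnected := by
  constructor
  · intro hs
    refine ⟨Set.nonempty_coe_sort.1 hs.nonempty, ⟨fun a ha b hb c hc => ?_⟩⟩
    by_contra hcs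
    obtain ⟨w⟩ := hs.preconnected ⟨a, ha⟩ ⟨b, hb⟩
    -- a walk from below `c` to above `c` must step onto `c`
    obtain ⟨d, -, hd, hd'⟩ := w.exists_boundary_dart {v | (v : Fin n) < c}
      (lt_of_le_of_ne hc.1 fun h => hcs (h ▸ ha)) (not_lt.2 hc.2)
    have hadj := pathGraph_adj.1 (induce_adj.1 d.adj)
    have : (d.snd : Fin n) ≠ c := fun h => hcs (h ▸ d.snd.2)
    simp only [Set.mem_ofPred_eq, Fin.lt_def, not_lt, ne_eq, Fin.ext_iff] at hd hd' this
    omega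
  · rintro ⟨hne, hs⟩
    have := hne.to_subtype
    refine (connected_iff _).2 ⟨fun u v => ?_, inferInstance⟩
    wlog huv : u ≤ v generalizing u v
    · exact (this v u (le_of_not_ge huv)).symm
    obtain ⟨k, hk⟩ := Nat.exists_eq_add_of_le (Fin.le_def.1 huv)
    have hv := v.1.isLt
    induction k generalizing u with
    | zero =>
      obtain rfl : u = v := Subtype.ext (Fin.ext (by omega))
      rfl
    | succ k ih =>
      let w : Fin n := ⟨u.1 + 1, by omega⟩
      have hwv : w ≤ v := Fin.le_def.2 (show (u : Fin n).1 + 1 ≤ (v : Fin n).1 by omega)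
      have hw : w ∈ s := hs.out u.2 v.2 ⟨Fin.le_def.2 (Nat.le_succ _), hwv⟩
      have huw : ((pathGraph n).induce s).Adj u ⟨w, hw⟩ := pathGraph_adj.2 (.inl rfl)
      exact huw.reachable.trans (ih ⟨w, hw⟩ hwv (show _ = (u : Fin n).1 + 1 + k by omega))

def pathInterval (n : ℕ) (p : ℕ × ℕ) : Set (Fin n) := Fin.val ⁻¹' Set.Ico p.1 p.2

variable {p q : ℕ × ℕ}

@[simp] lemma mem_pathInterval {v : Fin n} : v ∈ pathInterval n p ↔ p.1 ≤ v ∧ (v : ℕ) < p.2 :=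
  Iff.rfl

lemma pathInterval_nonempty (hp : p.1 < p.2) (hpn : p.2 ≤ n) : (pathInterval n p).Nonempty :=
  ⟨⟨p.1, by omega⟩, by simp [hp]⟩

lemma ordConnected_pathInterval : (pathInterval n p).OrdConnected :=
  ⟨fun a ha b hb c hc => by
    simp only [mem_pathInterval, Set.mem_Icc, Fin.le_def] at ha hb hc ⊢
    omega⟩

lemma pathInterval_univ : pathInterval n (0, n) = Set.univ :=
  Set.eq_univ_of_forall fun v => ⟨Nat.zero_le _, v.isLt⟩

lemma pathInterval_subset_pathInterval_iff (hp : p.1 < p.2) (hpn : p.2 ≤ n) :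
    pathInterval n p ⊆ pathInterval n q ↔ q.1 ≤ p.1 ∧ p.2 ≤ q.2 := by
  refine ⟨fun h => ?_, fun h v hv => ?_⟩
  · have h1 := h (show (⟨p.1, by omega⟩ : Fin n) ∈ pathInterval n p by simp [hp])
    have h2 := h (show (⟨p.2 - 1, by omega⟩ : Fin n) ∈ pathInterval n p by simp; omega)
    simp only [mem_pathInterval] at h1 h2
    omega
  · simp only [mem_pathInterval] at hv ⊢
    omega

lemma pathInterval_injOn : Set.InjOn (pathInterval n) {p | p.1 < p.2 ∧ p.2 ≤ n} := by
  intro p hp q hq h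
  have h1 := (pathInterval_subset_pathInterval_iff hp.1 hp.2).1 h.le
  have h2 := (pathInterval_subset_pathInterval_iff hq.1 hq.2).1 h.ge
  exact Prod.ext (by omega) (by omega)

lemma not_ordConnected_pathInterval_union (hp : p.1 < p.2) (hq : q.1 < q.2) (hqn : q.2 ≤ n)
    (hpq : p.2 < q.1) : ¬ (pathInterval n p ∪ pathInterval n q).OrdConnected := fun h => by
  have := h.out (x := ⟨p.2 - 1, by omega⟩) (y := ⟨q.1, by omega⟩) (.inl (by simp; omega))
    (.inr (by simp [hq]))
    (show (⟨p.2, by omega⟩ : Fin n) ∈ Set.Icc _ _ by simp [Fin.le_def]; omega)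
  simp only [Set.mem_union, mem_pathInterval] at this
  omega

lemma ordConnected_pathInterval_union_iff (hp : p.1 < p.2) (hpn : p.2 ≤ n) (hq : q.1 < q.2)
    (hqn : q.2 ≤ n) :
    (pathInterval n p ∪ pathInterval n q).OrdConnected ↔ ¬ (p.2 < q.1 ∨ q.2 < p.1) := by
  refine ⟨fun h hsep => ?_, fun h => ⟨fun a ha b hb c hc => ?_⟩⟩
  · rcases hsep with hsep | hsep
    · exact not_ordConnected_pathInterval_union hp hq hqn hsep h
    · exact not_ordConnected_pathInterval_union hq hp hpn hsep (Set.union_comm _ _ ▸ h)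
  · simp only [Set.mem_union, mem_pathInterval, Set.mem_Icc, Fin.le_def] at ha hb hc ⊢
    omega

lemma pathInterval_compatible_iff (hp : p.1 < p.2) (hpn : p.2 ≤ n) (hq : q.1 < q.2)
    (hqn : q.2 ≤ n) :
    (pathInterval n p ⊆ pathInterval n q ∨ pathInterval n q ⊆ pathInterval n p ∨
      ¬ ((pathGraph n).induce (pathInterval n p ∪ pathInterval n q)).Connected) ↔
      IntervalsCompatible p q := by
  rw [pathInterval_subset_pathInterval_iff hp hpn, pathInterval_subset_pathInterval_iff hq hqn,
    induce_pathGraph_connected_iff, ordConnected_pathInterval_union_iff hp hpn hq hqn,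
    IntervalsCompatible]
  have := (pathInterval_nonempty hp hpn).mono (Set.subset_union_left (t := pathInterval n q))
  simp only [this, true_and]
  omega

lemma exists_eq_pathInterval {s : Set (Fin n)} (hne : s.Nonempty) (hs : s.OrdConnected) :
    ∃ p : ℕ × ℕ, p.1 < p.2 ∧ p.2 ≤ n ∧ s = pathInterval n p := by
  obtain ⟨a, ha, hmin⟩ := s.exists_min_image Fin.val s.toFinite hne
  obtain ⟨b, hb, hmax⟩ := s.exists_max_image Fin.val s.toFinite hne
  have hab := hmin b hb
  refine ⟨(a, b + 1), by simp; omega, b.isLt, Set.ext fun v => ?_⟩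
  simp only [mem_pathInterval]
  refine ⟨fun hv => ⟨hmin v hv, Nat.lt_succ_of_le (hmax v hv)⟩, fun hv => ?_⟩
  exact hs.out ha hb ⟨Fin.le_def.2 hv.1, Fin.le_def.2 (Nat.le_of_lt_succ hv.2)⟩

def intervalTubing {F : Finset (ℕ × ℕ)} (hF : IsIntervalTubing 0 n F) (htop : (0, n) ∈ F) :
    Tubing (pathGraph n) where
  tubes := pathInterval n '' F
  htube := by
    rintro _ ⟨p, hp, rfl⟩
    have := hF.1 p hp
    have hne := pathInterval_nonempty (n := n) this.2.1 this.2.2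
    exact ⟨hne, induce_pathGraph_connected_iff.2 ⟨hne, ordConnected_pathInterval⟩⟩
  hcompat := by
    rintro _ ⟨p, hp, rfl⟩ _ ⟨q, hq, rfl⟩
    have := hF.1 p hp
    have := hF.1 q hq
    exact (pathInterval_compatible_iff (by omega) (by omega) (by omega) (by omega)).2
      (hF.2 p hp q hq)
  huniv := ⟨(0, n), htop, pathInterval_univ⟩

lemma ncard_intervalTubing {F : Finset (ℕ × ℕ)} (hF : IsIntervalTubing 0 n F)
    (htop : (0, n) ∈ F) : (intervalTubing hF htop).tubes.ncard = F.card := by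
  rw [intervalTubing, (pathInterval_injOn.mono fun p hp => (hF.1 p hp).2).ncard_image,
    Set.ncard_coe_finset]

lemma intervalTubing_inj {F G : Finset (ℕ × ℕ)} {hF : IsIntervalTubing 0 n F}
    {hFtop : (0, n) ∈ F} {hG : IsIntervalTubing 0 n G} {hGtop : (0, n) ∈ G}
    (h : intervalTubing hF hFtop = intervalTubing hG hGtop) : F = G :=
  Finset.coe_injective <| (pathInterval_injOn.image_eq_image_iff (fun p hp => (hF.1 p hp).2)
    (fun p hp => (hG.1 p hp).2)).1 (congrArg Tubing.tubes h)

lemma exists_intervalTubing_eq (T : Tubing (pathGraph n)) :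
    ∃ (F : Finset (ℕ × ℕ)) (hF : IsIntervalTubing 0 n F) (htop : (0, n) ∈ F),
      intervalTubing hF htop = T := by
  classical
  have htube : ∀ s ∈ T.tubes, ∃ p : ℕ × ℕ, p.1 < p.2 ∧ p.2 ≤ n ∧ s = pathInterval n p :=
    fun s hs => exists_eq_pathInterval (T.htube s hs).1
      (induce_pathGraph_connected_iff.1 (T.htube s hs).2).2
  let F := (Finset.range (n + 1) ×ˢ Finset.range (n + 1)).filter
    fun p => p.1 < p.2 ∧ p.2 ≤ n ∧ pathInterval n p ∈ T.tubes
  have hmem : ∀ p, p ∈ F ↔ p.1 < p.2 ∧ p.2 ≤ n ∧ pathInterval n p ∈ T.tubes := fun p => by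
    simp only [F, Finset.mem_filter, Finset.mem_product, Finset.mem_range, and_iff_right_iff_imp]
    omega
  have hF : IsIntervalTubing 0 n F := by
    refine ⟨fun p hp => ?_, fun p hp q hq => ?_⟩
    · have := (hmem p).1 hp
      omega
    · obtain ⟨hp, hpn, hpT⟩ := (hmem p).1 hp
      obtain ⟨hq, hqn, hqT⟩ := (hmem q).1 hq
      exact (pathInterval_compatible_iff hp hpn hq hqn).1 (T.hcompat _ hpT _ hqT)
  obtain ⟨v, -⟩ := (T.htube _ T.huniv).1
  refine ⟨F, hF, (hmem _).2 ⟨v.pos, le_rfl, pathInterval_univ ▸ T.huniv⟩,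
    Tubing.tubes_injective (Set.ext fun s => ⟨?_, fun hs => ?_⟩)⟩
  · rintro ⟨p, hp, rfl⟩
    exact ((hmem p).1 hp).2.2
  · obtain ⟨p, hp, hpn, rfl⟩ := htube s hs
    exact ⟨p, (hmem p).2 ⟨hp, hpn, hs⟩, rfl⟩

theorem card_maximal_tubings_pathGraph (hn : 0 < n) :
    Nat.card {T : Tubing (pathGraph n) // T.tubes.ncard = n} = catalan n := by
  have hmax := fun F : maxIntervalTubings 0 n => mem_maxIntervalTubings.1 F.2
  let Φ : maxIntervalTubings 0 n → {T : Tubing (pathGraph n) // T.tubes.ncard = n} := fun F =>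
    ⟨intervalTubing (hmax F).1 ((hmax F).1.top_mem (hmax F).2 hn),
      by rw [ncard_intervalTubing, (hmax F).2, Nat.sub_zero]⟩
  have hΦ : Φ.Bijective := by
    refine ⟨fun F G h => ?_, fun T => ?_⟩
    · simp only [Φ, Subtype.mk.injEq] at h
      exact Subtype.ext (intervalTubing_inj h)
    obtain ⟨F, hF, htop, hT⟩ := exists_intervalTubing_eq T.1
    have hcard : F.card = n := by rw [← ncard_intervalTubing hF htop, hT, T.2]
    exact ⟨⟨F, mem_maxIntervalTubings.2 ⟨hF, hcard⟩⟩, Subtype.ext hT⟩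
  rw [← Nat.card_eq_of_bijective Φ hΦ, Nat.card_eq_finsetCard, card_maxIntervalTubings,
    Nat.sub_zero]

end PathGraph

/-- The number of maximal tubings (`n`-tubings) of the complete graph on `n`
nodes is `n!` (vertices of the permutohedron), and the number of maximal
tubings of the path graph on `n` nodes is the Catalan number `C_n`
(vertices of the associahedron). -/
theorem card_maximal_tubings (n : ℕ) (hn : 0 < n) :
    Nat.card {T : Tubing (⊤ : SimpleGraph (Fin n)) // T.tubes.ncard = n} =
      n.factorial ∧
    Nat.card {T : Tubing (SimpleGraph.pathGraph n) // T.tubes.ncard = n} =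
      catalan n := by
  have : Nonempty (Fin n) := ⟨⟨0, hn⟩⟩
  refine ⟨?_, card_maximal_tubings_pathGraph hn⟩
  simpa only [Nat.card_fin] using card_maximal_tubings_top (V := Fin n)
end
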